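/- arXiv:1802.03652 — 6 statements merged into one kernel-verified Lean document; each statement's English description precedes it below -/
import Mathlib

section
/- Let M be a symmetric n×n matrix with entries in [0,1] such that each row sum is at most d. Then the expected number of simple k-cycles (counted as closed walks visiting k distinct vertices) in a random graph obtained by including each edge {i,j} independently with probability M_{ij} is at most d^k · rank(M). -/
/-!
Dropping injectivity only adds nonnegative terms, and the sum over all cyclic sequences
`c : Fin k → ι` of `∏ j, M (c j) (c (j + 1))` is `tr (M ^ k) = ∑ λᵢ ^ k`. By Gershgorin, each
eigenvalue of a nonnegative matrix with row sums at most `d` satisfies `|λᵢ| ≤ d`, and a symmetric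
matrix has exactly `rank M` nonzero eigenvalues.
-/

open Finset

namespace Matrix

variable {ι R : Type*} [Fintype ι] [DecidableEq ι] [CommSemiring R]

-- `Fin.cons a c` lists the vertices of the walk `a, c 0, …, c (m - 1), b`, and `Fin.snoc c b`
-- the vertices one step later.
theorem pow_succ_apply_eq_sum_prod (M : Matrix ι ι R) (m : ℕ) (a b : ι) :
    (M ^ (m + 1)) a b = ∑ c : Fin m → ι, ∏ j : Fin (m + 1),
      M ((Fin.cons a c : Fin (m + 1) → ι) j) ((Fin.snoc c b : Fin (m + 1) → ι) j) := by
  induction m generalizing a with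
  | zero => simp [Fin.snoc_zero]
  | succ m ih =>
    rw [pow_succ', mul_apply, ← (Fin.consEquiv fun _ ↦ ι).sum_comp, Fintype.sum_prod_type]
    refine sum_congr rfl fun x _ ↦ ?_
    simp only [ih, mul_sum, Fin.consEquiv, Equiv.coe_fn_mk, ← Fin.cons_snoc_eq_snoc_cons,
      Fin.prod_univ_succ, Fin.cons_zero, Fin.cons_succ]

theorem trace_pow_eq_sum_prod {k : ℕ} [NeZero k] (M : Matrix ι ι R) :
    (M ^ k).trace = ∑ c : Fin k → ι, ∏ j, M (c j) (c (j + 1)) := by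
  obtain ⟨m, rfl⟩ := Nat.exists_eq_succ_of_ne_zero (NeZero.ne k)
  have hshift (a : ι) (c : Fin m → ι) :
      (Fin.snoc c a : Fin (m + 1) → ι) = fun j ↦ (Fin.cons a c : Fin (m + 1) → ι) (j + 1) := by
    funext j
    cases j using Fin.lastCases with
    | last => simp [Fin.last_add_one]
    | cast j => simp
  simp only [trace, diag, pow_succ_apply_eq_sum_prod, hshift]
  rw [← (Fin.consEquiv fun _ ↦ ι).sum_comp, Fintype.sum_prod_type]
  rfl

theorem IsHermitian.trace_pow {𝕜 : Type*} [RCLike 𝕜] {A : Matrix ι ι 𝕜} (hA : A.IsHermitian)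
    (p : ℕ) : (A ^ p).trace = ∑ i, (hA.eigenvalues i : 𝕜) ^ p := by
  conv_lhs => rw [hA.spectral_theorem, ← map_pow, Unitary.conjStarAlgAut_apply, trace_mul_cycle,
    Unitary.coe_star_mul_self, one_mul, diagonal_pow, trace_diagonal]
  rfl

theorem norm_le_of_hasEigenvalue {K : Type*} [NormedField K] {A : Matrix ι ι K} {μ : K}
    (hμ : Module.End.HasEigenvalue A.toLin' μ) {d : ℝ} (hrow : ∀ i, ∑ j, ‖A i j‖ ≤ d) :
    ‖μ‖ ≤ d := by
  obtain ⟨i, hi⟩ := eigenvalue_mem_ball hμ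
  rw [mem_closedBall_iff_norm] at hi
  calc ‖μ‖ ≤ ‖μ - A i i‖ + ‖A i i‖ := norm_le_norm_sub_add μ (A i i)
    _ ≤ ∑ j ∈ univ.erase i, ‖A i j‖ + ‖A i i‖ := by gcongr
    _ = ∑ j, ‖A i j‖ := sum_erase_add _ _ (mem_univ i)
    _ ≤ d := hrow i

theorem IsHermitian.abs_eigenvalues_le {A : Matrix ι ι ℝ} (hA : A.IsHermitian)
    (hnonneg : ∀ i j, 0 ≤ A i j) {d : ℝ} (hrow : ∀ i, ∑ j, A i j ≤ d) (i : ι) :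
    |hA.eigenvalues i| ≤ d := by
  have hμ : Module.End.HasEigenvalue A.toLin' (hA.eigenvalues i) :=
    .of_mem_spectrum (by simpa [spectrum_toLin'] using hA.eigenvalues_mem_spectrum_real i)
  refine norm_le_of_hasEigenvalue hμ fun i ↦ ?_
  simpa only [Real.norm_of_nonneg (hnonneg i _)] using hrow i

end Matrix

theorem Finset.sum_pow_le_pow_mul_card_ne_zero {ι : Type*} (s : Finset ι) (f : ι → ℝ) {d : ℝ}
    (hf : ∀ i ∈ s, |f i| ≤ d) {k : ℕ} (hk : k ≠ 0) :
    ∑ i ∈ s, f i ^ k ≤ d ^ k * #{i ∈ s | f i ≠ 0} := by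
  rw [← sum_filter_of_ne fun i _ hi ↦ by simpa [hk] using hi, mul_comm, ← nsmul_eq_mul]
  refine sum_le_card_nsmul _ _ _ fun i hi ↦ ?_
  calc f i ^ k ≤ |f i| ^ k := by simpa only [abs_pow] using le_abs_self (f i ^ k)
    _ ≤ d ^ k := by gcongr; exact hf i (mem_filter.mp hi).1

/-- For a symmetric matrix `M` with entries in `[0,1]` and row sums at most `d`,
the expected number of simple `k`-cycles in a graph sampled from `M` (each edge `{i,j}` included
independently with probability `M i j`) is at most `d ^ k * rank M`. The expectation is the sum
over injective cyclic vertex sequences of the product of edge probabilities. -/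
theorem expected_simple_cycles_le_rank (n k : ℕ) [NeZero k] (M : Matrix (Fin n) (Fin n) ℝ)
    (hsymm : M.IsSymm) (hentries : ∀ i j, 0 ≤ M i j ∧ M i j ≤ 1)
    (d : ℝ) (hrow : ∀ i, ∑ j, M i j ≤ d) :
    ∑ c ∈ Finset.univ.filter (fun c : Fin k → Fin n => Function.Injective c),
        ∏ j : Fin k, M (c j) (c (j + 1)) ≤ d ^ k * (M.rank : ℝ) := by
  have hM : M.IsHermitian := Matrix.isHermitian_iff_isSymm.mpr hsymm
  have hnonneg (i j : Fin n) : 0 ≤ M i j := (hentries i j).1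
  calc _ ≤ ∑ c : Fin k → Fin n, ∏ j, M (c j) (c (j + 1)) :=
        sum_le_sum_of_subset_of_nonneg (filter_subset _ _) fun c _ _ ↦
          prod_nonneg fun j _ ↦ hnonneg _ _
    _ = (M ^ k).trace := M.trace_pow_eq_sum_prod.symm
    _ = ∑ i, hM.eigenvalues i ^ k := hM.trace_pow k
    _ ≤ d ^ k * #{i | hM.eigenvalues i ≠ 0} :=
        sum_pow_le_pow_mul_card_ne_zero _ _ (fun i _ ↦ hM.abs_eigenvalues_le hnonneg hrow i)
          (NeZero.ne k)
    _ = d ^ k * M.rank := by rw [hM.rank_eq_card_non_zero_eigs, Fintype.card_subtype]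
end

section
/- Let H be a finite simple graph, and let c_3 = C_3(H)/|E(H)| and c_4 = C_4(H)/|E(H)| where C_k(H) denotes the number of closed walks of length k in H that trace a simple k-cycle. Then c_3·(c_3/2 − 1) ≤ c_4. -/
/-!
For a dart `(u, v)` of `H` let `t(u, v)` be the number of common neighbours of `u` and `v`.
Every triangle is a dart together with an apex, so `C₃ = ∑ t`; two distinct apexes `x ≠ y`
over the same dart close the 4-cycle `x u y v`, so `∑ t (t - 1) ≤ C₄`. Cauchy–Schwarz over the
`2 |E|` darts gives `C₃² ≤ 2 |E| ∑ t² ≤ 2 |E| (C₄ + C₃)`, which is the claim after dividing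
by `2 |E|²`.
-/

open Finset

/-- The number of closed `k`-walks in `G` that trace a simple `k`-cycle: injective maps
`c : Fin k → V` such that consecutive vertices (cyclically) are adjacent. -/
def simpleCycleCount {V : Type*} [Fintype V] [DecidableEq V] (G : SimpleGraph V)
    [DecidableRel G.Adj] (k : ℕ) [NeZero k] : ℕ :=
  (Finset.univ.filter (fun c : Fin k → V =>
    Function.Injective c ∧ ∀ j : Fin k, G.Adj (c j) (c (j + 1)))).card

namespace SimpleGraph

lemma injective_of_adj_succ_three {V : Type*} {G : SimpleGraph V} {c : Fin 3 → V}
    (hc : ∀ j : Fin 3, G.Adj (c j) (c (j + 1))) : Function.Injective c := by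
  -- any two distinct vertices of a 3-cycle are consecutive
  have h0 := (hc 0).ne
  have h1 := (hc 1).ne
  have h2 := (hc 2).ne
  intro i j hij
  fin_cases i <;> fin_cases j <;> simp_all [eq_comm]

variable {V : Type*} [Fintype V] [DecidableEq V] (G : SimpleGraph V) [DecidableRel G.Adj]

def commonNeighborFinset (u v : V) : Finset V := G.neighborFinset u ∩ G.neighborFinset v

variable {G}

@[simp]
lemma mem_commonNeighborFinset {u v x : V} :
    x ∈ G.commonNeighborFinset u v ↔ G.Adj u x ∧ G.Adj v x := by
  simp [commonNeighborFinset]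

variable (G)

theorem simpleCycleCount_three_eq_sum :
    simpleCycleCount G 3 = ∑ d : G.Dart, #(G.commonNeighborFinset d.fst d.snd) := by
  rw [← card_sigma, simpleCycleCount]
  refine card_bij' (fun c hc => ⟨⟨(c 1, c 2), (mem_filter.1 hc).2.2 1⟩, c 0⟩)
    (fun p _ => ![p.2, p.1.fst, p.1.snd]) ?_ ?_ ?_ ?_
  · intro c hc
    have h := (mem_filter.1 hc).2.2
    simpa using ⟨(h 0).symm, h 2⟩
  · rintro ⟨d, x⟩ hx
    simp only [mem_sigma, mem_univ, mem_commonNeighborFinset, true_and] at hx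
    have hadj : ∀ j : Fin 3, G.Adj (![x, d.fst, d.snd] j) (![x, d.fst, d.snd] (j + 1)) := by
      intro j; fin_cases j
      exacts [hx.1.symm, d.adj, hx.2]
    exact mem_filter.2 ⟨mem_univ _, injective_of_adj_succ_three hadj, hadj⟩
  · intro c _
    funext j; fin_cases j <;> rfl
  · rintro ⟨d, x⟩ _
    rfl

theorem sum_card_offDiag_commonNeighborFinset_le :
    ∑ d : G.Dart, #(G.commonNeighborFinset d.fst d.snd).offDiag ≤ simpleCycleCount G 4 := by
  rw [← card_sigma, simpleCycleCount]
  refine card_le_card_of_injOn (fun p => ![p.2.1, p.1.fst, p.2.2, p.1.snd]) ?_ ?_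
  · rintro ⟨d, x, y⟩ hxy
    simp only [coe_sigma, Set.mem_sigma_iff, mem_coe, mem_univ, mem_offDiag,
      mem_commonNeighborFinset, true_and] at hxy
    obtain ⟨⟨hux, hvx⟩, ⟨huy, hvy⟩, hne⟩ := hxy
    refine mem_filter.2 ⟨mem_univ _, ?_, ?_⟩
    · intro i j hij
      fin_cases i <;> fin_cases j <;> simp_all [eq_comm]
    · intro j; fin_cases j
      exacts [hux.symm, huy, hvy.symm, hvx]
  · rintro ⟨d, x, y⟩ - ⟨d', x', y'⟩ - h
    have h0 := congrFun h 0
    have h1 := congrFun h 1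
    have h2 := congrFun h 2
    have h3 := congrFun h 3
    simp only [Matrix.cons_val] at h0 h1 h2 h3
    obtain rfl : d = d' := Dart.ext _ _ (Prod.ext h1 h3)
    simp [h0, h2]

theorem sum_sq_card_commonNeighborFinset_le :
    ∑ d : G.Dart, #(G.commonNeighborFinset d.fst d.snd) ^ 2 ≤
      simpleCycleCount G 4 + simpleCycleCount G 3 := by
  have hsq (s : Finset V) : #s ^ 2 = #s.offDiag + #s := by
    rw [offDiag_card, sq, Nat.sub_add_cancel (Nat.le_mul_self _)]
  simp only [hsq, sum_add_distrib, simpleCycleCount_three_eq_sum]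
  exact Nat.add_le_add_right G.sum_card_offDiag_commonNeighborFinset_le _

theorem sq_simpleCycleCount_three_le :
    (simpleCycleCount G 3 : ℝ) ^ 2 ≤
      2 * #G.edgeFinset * (simpleCycleCount G 4 + simpleCycleCount G 3) := by
  calc (simpleCycleCount G 3 : ℝ) ^ 2
      = (∑ d : G.Dart, (#(G.commonNeighborFinset d.fst d.snd) : ℝ)) ^ 2 := by
        rw [simpleCycleCount_three_eq_sum, Nat.cast_sum]
    _ ≤ #(univ : Finset G.Dart) *
          ∑ d : G.Dart, (#(G.commonNeighborFinset d.fst d.snd) : ℝ) ^ 2 :=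
        sq_sum_le_card_mul_sum_sq
    _ ≤ 2 * #G.edgeFinset * (simpleCycleCount G 4 + simpleCycleCount G 3) := by
        rw [card_univ, dart_card_eq_twice_card_edges]
        exact_mod_cast Nat.mul_le_mul_left _ G.sum_sq_card_commonNeighborFinset_le

end SimpleGraph

/-- For a finite simple graph `H` with `c₃ = C₃(H)/|E(H)|` and
`c₄ = C₄(H)/|E(H)|`, where `C_k` counts closed `k`-walks tracing simple `k`-cycles,
we have `c₃ (c₃/2 − 1) ≤ c₄`. -/
theorem triangle_fourcycle_ratio_ineq {V : Type*} [Fintype V] [DecidableEq V]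
    (H : SimpleGraph V) [DecidableRel H.Adj]
    (c3 c4 : ℝ)
    (hc3 : c3 = (simpleCycleCount H 3 : ℝ) / (H.edgeFinset.card : ℝ))
    (hc4 : c4 = (simpleCycleCount H 4 : ℝ) / (H.edgeFinset.card : ℝ)) :
    c3 * (c3 / 2 - 1) ≤ c4 := by
  set m : ℝ := (H.edgeFinset.card : ℝ)
  rcases eq_or_ne m 0 with hm | hm
  · -- division by zero: `c₃ = c₄ = 0`
    simp [hc3, hc4, hm]
  have key := H.sq_simpleCycleCount_three_le
  have hgap : c4 - c3 * (c3 / 2 - 1) =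
      (2 * m * (simpleCycleCount H 4 + simpleCycleCount H 3) - (simpleCycleCount H 3 : ℝ) ^ 2) /
        (2 * m ^ 2) := by
    rw [hc3, hc4]; field_simp; ring
  have hnonneg : 0 ≤ c4 - c3 * (c3 / 2 - 1) := hgap ▸ div_nonneg (by linarith) (by positivity)
  linarith
end

section
/- For any simple graph G on n vertices with average degree d, the number of simple 4-cycles satisfies C_4(G) ≥ C_3(G)·(C_3(G)/(nd) − 1), where C_k(G) counts closed k-walks tracing simple k-cycles. -/
/-!
Sum over directed edges `uv` the number `t_uv` of common neighbours of `u` and `v`: this counts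
the triangle walks `u, v, w`, so `∑ t_uv = C₃`. Two distinct common neighbours `w ≠ x` of an edge
`uv` give the 4-cycle walk `w, u, x, v`, and distinct data give distinct walks, so
`∑ t_uv (t_uv - 1) ≤ C₄`. Cauchy–Schwarz over the `nd` directed edges bounds `∑ t_uv²` below by
`C₃² / (nd)`, and `C₄ ≥ ∑ t_uv² - ∑ t_uv ≥ C₃² / (nd) - C₃`.
-/

open Finset

theorem Finset.sum_mul_sum_div_card_sub_one_le_sum_sq_sub {ι R : Type*} [Field R] [LinearOrder R]
    [IsStrictOrderedRing R] (s : Finset ι) (f : ι → R) :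
    (∑ i ∈ s, f i) * ((∑ i ∈ s, f i) / #s - 1) ≤ ∑ i ∈ s, (f i ^ 2 - f i) := by
  have cauchySchwarz : (∑ i ∈ s, f i) ^ 2 / #s ≤ ∑ i ∈ s, f i ^ 2 := by
    refine div_le_of_le_mul₀ (Nat.cast_nonneg _) (sum_nonneg fun i _ ↦ sq_nonneg (f i)) ?_
    rw [mul_comm]
    exact sq_sum_le_card_mul_sum_sq
  rw [sum_sub_distrib]
  linarith [show (∑ i ∈ s, f i) * ((∑ i ∈ s, f i) / #s - 1)
    = (∑ i ∈ s, f i) ^ 2 / #s - ∑ i ∈ s, f i by ring]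

theorem Finset.cast_card_offDiag {α R : Type*} [DecidableEq α] [Ring R] (s : Finset α) :
    (#s.offDiag : R) = #s ^ 2 - #s := by
  rw [offDiag_card, Nat.cast_sub (Nat.le_mul_self _), Nat.cast_mul, sq]

namespace SimpleGraph

variable {V : Type*} (G : SimpleGraph V)

theorem injective_and_forall_adj_fin_three_iff (c : Fin 3 → V) :
    (Function.Injective c ∧ ∀ j, G.Adj (c j) (c (j + 1))) ↔
      G.Adj (c 0) (c 1) ∧ G.Adj (c 1) (c 2) ∧ G.Adj (c 2) (c 0) := by
  refine ⟨fun ⟨_, h⟩ ↦ ⟨h 0, h 1, h 2⟩, fun ⟨h01, h12, h20⟩ ↦ ⟨?_, ?_⟩⟩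
  · simp [Function.Injective, Fin.forall_fin_succ]
    exact ⟨⟨h01.ne, h20.ne'⟩, ⟨h01.ne', h12.ne⟩, h20.ne, h12.ne'⟩
  · simp [Fin.forall_fin_succ, *]

theorem injective_and_forall_adj_fin_four_iff (c : Fin 4 → V) :
    (Function.Injective c ∧ ∀ j, G.Adj (c j) (c (j + 1))) ↔
      c 0 ≠ c 2 ∧ c 1 ≠ c 3 ∧
        G.Adj (c 0) (c 1) ∧ G.Adj (c 1) (c 2) ∧ G.Adj (c 2) (c 3) ∧ G.Adj (c 3) (c 0) := by
  refine ⟨fun ⟨hc, h⟩ ↦ ⟨hc.ne (by decide), hc.ne (by decide), h 0, h 1, h 2, h 3⟩,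
    fun ⟨h02, h13, h01, h12, h23, h30⟩ ↦ ⟨?_, ?_⟩⟩
  · simp [Function.Injective, Fin.forall_fin_succ]
    exact ⟨⟨h01.ne, h02, h30.ne'⟩, ⟨h01.ne', h12.ne, h13⟩, ⟨Ne.symm h02, h12.ne', h23.ne⟩,
      h30.ne, Ne.symm h13, h23.ne'⟩
  · simp [Fin.forall_fin_succ, *]

variable [Fintype V] [DecidableEq V] [DecidableRel G.Adj]

theorem simpleCycleCount_three_eq_sum_card_commonNeighbors :
    simpleCycleCount G 3 =
      ∑ p ∈ {p : V × V | G.Adj p.1 p.2}, #(G.commonNeighbors p.1 p.2).toFinset := by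
  rw [← card_sigma]
  refine card_nbij' (fun c ↦ ⟨(c 0, c 1), c 2⟩) (fun q ↦ ![q.1.1, q.1.2, q.2]) ?_ ?_ ?_ ?_
  · intro c hc
    simp only [mem_coe, mem_sigma, mem_filter, mem_univ, true_and, Set.mem_toFinset,
      mem_commonNeighbors, injective_and_forall_adj_fin_three_iff] at hc ⊢
    exact ⟨hc.1, hc.2.2.symm, hc.2.1⟩
  · rintro ⟨⟨u, v⟩, w⟩ hq
    simp only [mem_coe, mem_sigma, mem_filter, mem_univ, true_and, Set.mem_toFinset,
      mem_commonNeighbors, injective_and_forall_adj_fin_three_iff] at hq ⊢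
    simpa using ⟨hq.1, hq.2.2, hq.2.1.symm⟩
  · intro c _
    ext i
    fin_cases i <;> rfl
  · intro q _
    rfl

theorem sum_card_offDiag_commonNeighbors_le_simpleCycleCount_four :
    ∑ p ∈ {p : V × V | G.Adj p.1 p.2}, #(G.commonNeighbors p.1 p.2).toFinset.offDiag ≤
      simpleCycleCount G 4 := by
  rw [← card_sigma]
  refine card_le_card_of_injOn (fun q ↦ ![q.2.1, q.1.1, q.2.2, q.1.2]) ?_ ?_
  · rintro ⟨⟨u, v⟩, w, x⟩ hq
    simp only [mem_coe, mem_sigma, mem_filter, mem_univ, true_and, mem_offDiag, Set.mem_toFinset,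
      mem_commonNeighbors, injective_and_forall_adj_fin_four_iff] at hq ⊢
    obtain ⟨huv, ⟨huw, hvw⟩, ⟨hux, hvx⟩, hwx⟩ := hq
    simpa using ⟨hwx, huv.ne, huw.symm, hux, hvx.symm, hvw⟩
  · rintro ⟨⟨u, v⟩, w, x⟩ - ⟨⟨u', v'⟩, w', x'⟩ - h
    obtain ⟨rfl, rfl, rfl, rfl⟩ : w = w' ∧ u = u' ∧ x = x' ∧ v = v' := by simpa using h
    rfl

end SimpleGraph

theorem fourcycles_ge_triangles_general {V : Type*} [Fintype V] [DecidableEq V]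
    (G : SimpleGraph V) [DecidableRel G.Adj] (n : ℕ) (d : ℝ)
    (hd : (n : ℝ) * d = 2 * (G.edgeFinset.card : ℝ)) :
    (simpleCycleCount G 4 : ℝ) ≥
      (simpleCycleCount G 3 : ℝ) * ((simpleCycleCount G 3 : ℝ) / ((n : ℝ) * d) - 1) := by
  set darts : Finset (V × V) := {p : V × V | G.Adj p.1 p.2}
  set t : V × V → ℝ := fun p ↦ #(G.commonNeighbors p.1 p.2).toFinset
  have card_darts : (#darts : ℝ) = n * d := by
    rw [hd]
    exact_mod_cast G.two_mul_card_edgeFinset.symm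
  have triangles : (simpleCycleCount G 3 : ℝ) = ∑ p ∈ darts, t p := by
    rw [G.simpleCycleCount_three_eq_sum_card_commonNeighbors, Nat.cast_sum]
  have fourCycles : ∑ p ∈ darts, (t p ^ 2 - t p) ≤ simpleCycleCount G 4 := by
    simp only [t, ← cast_card_offDiag]
    exact_mod_cast G.sum_card_offDiag_commonNeighbors_le_simpleCycleCount_four
  rw [triangles, ← card_darts]
  exact (sum_mul_sum_div_card_sub_one_le_sum_sq_sub darts t).trans fourCycles

/-- For any simple graph `G` on `n` vertices with average degree `d`,
`C₄(G) ≥ C₃(G) (C₃(G)/(n d) − 1)`, where `C_k` counts closed `k`-walks tracing simple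
`k`-cycles. -/
theorem fourcycles_ge_triangles {V : Type*} [Fintype V] [DecidableEq V]
    (G : SimpleGraph V) [DecidableRel G.Adj] (n : ℕ) (d : ℝ)
    (hn : Fintype.card V = n)
    (hd : (n : ℝ) * d = 2 * (G.edgeFinset.card : ℝ)) :
    (simpleCycleCount G 4 : ℝ) ≥
      (simpleCycleCount G 3 : ℝ) * ((simpleCycleCount G 3 : ℝ) / ((n : ℝ) * d) - 1) :=
  fourcycles_ge_triangles_general G n d hd
end

section
/- Let X ~ Bin(n,p) with 0 < p ≤ 1. Then E[1/X | X ≥ 1] ≤ (1/(p(n+1)))·(1 + 3/(p(n+2))). -/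
open Finset

/-! Write `b(n, j) = C(n, j) pʲ qⁿ⁻ʲ` with `q = 1 - p`. For `j ≥ 1`,
`1/j ≤ 1/(j+1) + 3/((j+1)(j+2))`, and absorbing `j + 1`, resp. `(j + 1)(j + 2)`, into the binomial
coefficient turns `b(n, j)/(j+1)` into `b(n+1, j+1)/(p(n+1))` and `b(n, j)/((j+1)(j+2))` into
`b(n+2, j+2)/(p²(n+1)(n+2))`. The resulting sums are the tails `P(Bin(n+k, p) > k)` for `k = 1, 2`,
and each is at most `P(Bin(n, p) ≥ 1) = 1 - qⁿ`: the event `Bin(n+k, p) ≤ k` contains the event that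
the first `n` trials all fail, of probability `qⁿ`. -/

section BinomialTerm

variable {R : Type*}

def binomialTerm [CommSemiring R] (p q : R) (n j : ℕ) : R :=
  n.choose j * p ^ j * q ^ (n - j)

theorem sum_range_binomialTerm [CommSemiring R] {p q : R} (h : p + q = 1) (n : ℕ) :
    ∑ j ∈ range (n + 1), binomialTerm p q n j = 1 := by
  have hbinom := (add_pow p q n).symm
  rw [h, one_pow] at hbinom
  rw [← hbinom]
  exact sum_congr rfl fun j _ => by rw [binomialTerm]; ring

theorem sum_range_binomialTerm_add [CommRing R] {p q : R} (h : p + q = 1) (n k : ℕ) :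
    ∑ i ∈ range n, binomialTerm p q (n + k) (i + k + 1) =
      1 - ∑ j ∈ range (k + 1), binomialTerm p q (n + k) j := by
  rw [eq_sub_iff_add_eq', ← sum_range_binomialTerm h (n + k), show n + k + 1 = k + 1 + n by ring,
    sum_range_add _ (k + 1) n]
  congr 1
  exact sum_congr rfl fun i _ => by rw [add_assoc, add_comm i]

theorem pow_le_sum_range_binomialTerm [CommRing R] [PartialOrder R] [IsOrderedRing R] {p q : R}
    (hp : 0 ≤ p) (hq : 0 ≤ q) (h : p + q = 1) (n k : ℕ) :
    q ^ n ≤ ∑ j ∈ range (k + 1), binomialTerm p q (n + k) j := by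
  calc q ^ n = ∑ j ∈ range (k + 1), q ^ n * binomialTerm p q k j := by
        rw [← mul_sum, sum_range_binomialTerm h, mul_one]
    _ ≤ ∑ j ∈ range (k + 1), binomialTerm p q (n + k) j := by
        refine sum_le_sum fun j hj => ?_
        have hjk : n + k - j = n + (k - j) := by have := mem_range.1 hj; omega
        rw [binomialTerm, binomialTerm, hjk, pow_add]
        calc q ^ n * (k.choose j * p ^ j * q ^ (k - j))
            = k.choose j * (p ^ j * (q ^ n * q ^ (k - j))) := by ring
          _ ≤ (n + k).choose j * (p ^ j * (q ^ n * q ^ (k - j))) := by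
            gcongr
            exact Nat.le_add_left k n
          _ = _ := by ring

theorem sum_range_binomialTerm_add_le [CommRing R] [PartialOrder R] [IsOrderedRing R] {p q : R}
    (hp : 0 ≤ p) (hq : 0 ≤ q) (h : p + q = 1) (n k : ℕ) :
    ∑ i ∈ range n, binomialTerm p q (n + k) (i + k + 1) ≤ 1 - q ^ n := by
  rw [sum_range_binomialTerm_add h]
  exact sub_le_sub_left (pow_le_sum_range_binomialTerm hp hq h n k) 1

theorem binomialTerm_div_succ [Field R] [CharZero R] {p : R} (hp : p ≠ 0) (q : R) (n j : ℕ) :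
    binomialTerm p q n j / (j + 1) = binomialTerm p q (n + 1) (j + 1) / (p * (n + 1)) := by
  have hchoose : ((n + 1 : ℕ) : R) * n.choose j = (n + 1).choose (j + 1) * (j + 1 : ℕ) := by
    exact_mod_cast Nat.add_one_mul_choose_eq n j
  push_cast at hchoose
  rw [binomialTerm, binomialTerm, Nat.add_sub_add_right]
  field_simp
  linear_combination p ^ (j + 1) * q ^ (n - j) * hchoose

theorem binomialTerm_div_succ_mul_succ_succ [Field R] [CharZero R] {p : R} (hp : p ≠ 0) (q : R)
    (n j : ℕ) :
    binomialTerm p q n j / ((j + 1) * (j + 2)) =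
      binomialTerm p q (n + 2) (j + 2) / (p ^ 2 * ((n + 1) * (n + 2))) := by
  have h : binomialTerm p q (n + 1) (j + 1) / ((j : R) + 2) =
      binomialTerm p q (n + 2) (j + 2) / (p * (n + 2)) := by
    convert binomialTerm_div_succ hp q (n + 1) (j + 1) using 2 <;> push_cast <;> ring
  rw [← div_div, binomialTerm_div_succ hp, div_right_comm, h, div_div]
  ring

end BinomialTerm

theorem div_le_div_add_one_add_three_mul_div {K : Type*} [Field K] [LinearOrder K]
    [IsStrictOrderedRing K] {c x : K} (hc : 0 ≤ c) (hx : 1 ≤ x) :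
    c / x ≤ c / (x + 1) + 3 * (c / ((x + 1) * (x + 2))) := by
  have hx0 : 0 < x := by linarith
  have hx1 : 0 ≤ x - 1 := by linarith
  have hslack : c / (x + 1) + 3 * (c / ((x + 1) * (x + 2))) - c / x =
      c * (2 * (x - 1)) / (x * (x + 1) * (x + 2)) := by
    field_simp
    ring
  rw [← sub_nonneg, hslack]
  positivity

/-- For `X ~ Bin(n,p)` with `0 < p ≤ 1`,
`E[1/X | X ≥ 1] ≤ (1/(p(n+1)))(1 + 3/(p(n+2)))`, where
`E[1/X | X ≥ 1] = (Σ_{i=1}^n C(n,i) p^i (1−p)^{n−i}/i) / P(X ≥ 1)` and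
`P(X ≥ 1) = 1 − (1−p)^n`. -/
theorem binomial_cond_expectation_inv_le (n : ℕ) (p : ℝ) (hp : 0 < p) (hp1 : p ≤ 1) :
    (∑ i ∈ Finset.Icc 1 n, (n.choose i : ℝ) * p ^ i * (1 - p) ^ (n - i) / i) /
        (1 - (1 - p) ^ n) ≤
      1 / (p * (n + 1)) * (1 + 3 / (p * (n + 2))) := by
  set q := 1 - p
  have hq : 0 ≤ q := sub_nonneg.2 hp1
  have hpq : p + q = 1 := add_sub_cancel p 1
  have hP : 0 ≤ 1 - q ^ n := sub_nonneg.2 (pow_le_one₀ hq (by linarith))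
  refine div_le_of_le_mul₀ hP (by positivity) ?_
  calc _ = ∑ i ∈ range n, binomialTerm p q n (i + 1) / ((i + 1 : ℕ) : ℝ) := by
        rw [← Ico_add_one_right_eq_Icc, sum_Ico_eq_sum_range]
        simp [binomialTerm, add_comm]
    _ ≤ ∑ i ∈ range n, (binomialTerm p q n (i + 1) / ((i + 1 : ℕ) + 1) +
          3 * (binomialTerm p q n (i + 1) / ((((i + 1 : ℕ) : ℝ) + 1) * ((i + 1 : ℕ) + 2)))) :=
        sum_le_sum fun i _ => div_le_div_add_one_add_three_mul_div
          (by unfold binomialTerm; positivity) (by simp)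
    _ = (∑ i ∈ range n, binomialTerm p q (n + 1) (i + 1 + 1)) / (p * (n + 1)) +
          3 * ((∑ i ∈ range n, binomialTerm p q (n + 2) (i + 2 + 1)) /
            (p ^ 2 * ((n + 1) * (n + 2)))) := by
        simp only [binomialTerm_div_succ hp.ne', binomialTerm_div_succ_mul_succ_succ hp.ne',
          sum_add_distrib, sum_div, mul_sum]
    _ ≤ (1 - q ^ n) / (p * (n + 1)) + 3 * ((1 - q ^ n) / (p ^ 2 * ((n + 1) * (n + 2)))) := by
        gcongr <;> exact sum_range_binomialTerm_add_le hp.le hq hpq n _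
    _ = _ := by field_simp
end

section
/- Define the sequence s_1 = 1 and s_n = (n−1) · Σ_{j=1}^{n−1} s_j · s_{n−j} for n ≥ 2. Then s_{n+1} < (2n+2)·s_n for all n ≥ 1, and s_{n+1} > (2n+1)·s_n for all n ≥ 4. -/
open Finset

private lemma sum_Ioc_eq_range (f : ℕ → ℕ) (a b : ℕ) :
    ∑ j ∈ Finset.Ioc a b, f j = ∑ i ∈ Finset.range (b - a), f (a + 1 + i) := by
  have h : Finset.Ioc a b = Finset.Ico (a + 1) (b + 1) := by
    ext x
    simp only [Finset.mem_Ioc, Finset.mem_Ico]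
    omega
  rw [h, Finset.sum_Ico_eq_sum_range, Nat.add_sub_add_right]

private lemma sum_Icc_eq_range (f : ℕ → ℕ) (m : ℕ) :
    ∑ j ∈ Finset.Icc 1 m, f j = ∑ i ∈ Finset.range m, f (1 + i) := by
  have h : Finset.Icc 1 m = Finset.Ico 1 (m + 1) := by
    ext x
    simp only [Finset.mem_Icc, Finset.mem_Ico]
    omega
  rw [h, Finset.sum_Ico_eq_sum_range, Nat.add_sub_cancel]

private lemma range_sum_2 (f : ℕ → ℕ) : ∑ i ∈ Finset.range 2, f i = f 0 + f 1 := by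
  rw [show (2:ℕ) = 1+1 from rfl, Finset.sum_range_succ, Finset.sum_range_one]

private lemma range_sum_3 (f : ℕ → ℕ) : ∑ i ∈ Finset.range 3, f i = f 0 + f 1 + f 2 := by
  rw [show (3:ℕ) = 2+1 from rfl, Finset.sum_range_succ, show (2:ℕ) = 1+1 from rfl, Finset.sum_range_succ, Finset.sum_range_one]

private lemma range_sum_4 (f : ℕ → ℕ) : ∑ i ∈ Finset.range 4, f i = f 0 + f 1 + f 2 + f 3 := by
  rw [show (4:ℕ) = 3+1 from rfl, Finset.sum_range_succ, show (3:ℕ) = 2+1 from rfl, Finset.sum_range_succ, show (2:ℕ) = 1+1 from rfl, Finset.sum_range_succ, Finset.sum_range_one]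

private lemma range_sum_5 (f : ℕ → ℕ) : ∑ i ∈ Finset.range 5, f i = f 0 + f 1 + f 2 + f 3 + f 4 := by
  rw [show (5:ℕ) = 4+1 from rfl, Finset.sum_range_succ, show (4:ℕ) = 3+1 from rfl, Finset.sum_range_succ, show (3:ℕ) = 2+1 from rfl, Finset.sum_range_succ, show (2:ℕ) = 1+1 from rfl, Finset.sum_range_succ, Finset.sum_range_one]

private lemma range_sum_6 (f : ℕ → ℕ) : ∑ i ∈ Finset.range 6, f i = f 0 + f 1 + f 2 + f 3 + f 4 + f 5 := by
  rw [show (6:ℕ) = 5+1 from rfl, Finset.sum_range_succ, show (5:ℕ) = 4+1 from rfl, Finset.sum_range_succ, show (4:ℕ) = 3+1 from rfl, Finset.sum_range_succ, show (3:ℕ) = 2+1 from rfl, Finset.sum_range_succ, show (2:ℕ) = 1+1 from rfl, Finset.sum_range_succ, Finset.sum_range_one]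

private lemma range_sum_7 (f : ℕ → ℕ) : ∑ i ∈ Finset.range 7, f i = f 0 + f 1 + f 2 + f 3 + f 4 + f 5 + f 6 := by
  rw [show (7:ℕ) = 6+1 from rfl, Finset.sum_range_succ, show (6:ℕ) = 5+1 from rfl, Finset.sum_range_succ, show (5:ℕ) = 4+1 from rfl, Finset.sum_range_succ, show (4:ℕ) = 3+1 from rfl, Finset.sum_range_succ, show (3:ℕ) = 2+1 from rfl, Finset.sum_range_succ, show (2:ℕ) = 1+1 from rfl, Finset.sum_range_succ, Finset.sum_range_one]

private lemma range_sum_8 (f : ℕ → ℕ) : ∑ i ∈ Finset.range 8, f i = f 0 + f 1 + f 2 + f 3 + f 4 + f 5 + f 6 + f 7 := by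
  rw [show (8:ℕ) = 7+1 from rfl, Finset.sum_range_succ, show (7:ℕ) = 6+1 from rfl, Finset.sum_range_succ, show (6:ℕ) = 5+1 from rfl, Finset.sum_range_succ, show (5:ℕ) = 4+1 from rfl, Finset.sum_range_succ, show (4:ℕ) = 3+1 from rfl, Finset.sum_range_succ, show (3:ℕ) = 2+1 from rfl, Finset.sum_range_succ, show (2:ℕ) = 1+1 from rfl, Finset.sum_range_succ, Finset.sum_range_one]

private lemma range_sum_9 (f : ℕ → ℕ) : ∑ i ∈ Finset.range 9, f i = f 0 + f 1 + f 2 + f 3 + f 4 + f 5 + f 6 + f 7 + f 8 := by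
  rw [show (9:ℕ) = 8+1 from rfl, Finset.sum_range_succ, show (8:ℕ) = 7+1 from rfl, Finset.sum_range_succ, show (7:ℕ) = 6+1 from rfl, Finset.sum_range_succ, show (6:ℕ) = 5+1 from rfl, Finset.sum_range_succ, show (5:ℕ) = 4+1 from rfl, Finset.sum_range_succ, show (4:ℕ) = 3+1 from rfl, Finset.sum_range_succ, show (3:ℕ) = 2+1 from rfl, Finset.sum_range_succ, show (2:ℕ) = 1+1 from rfl, Finset.sum_range_succ, Finset.sum_range_one]

private lemma range_sum_10 (f : ℕ → ℕ) : ∑ i ∈ Finset.range 10, f i = f 0 + f 1 + f 2 + f 3 + f 4 + f 5 + f 6 + f 7 + f 8 + f 9 := by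
  rw [show (10:ℕ) = 9+1 from rfl, Finset.sum_range_succ, show (9:ℕ) = 8+1 from rfl, Finset.sum_range_succ, show (8:ℕ) = 7+1 from rfl, Finset.sum_range_succ, show (7:ℕ) = 6+1 from rfl, Finset.sum_range_succ, show (6:ℕ) = 5+1 from rfl, Finset.sum_range_succ, show (5:ℕ) = 4+1 from rfl, Finset.sum_range_succ, show (4:ℕ) = 3+1 from rfl, Finset.sum_range_succ, show (3:ℕ) = 2+1 from rfl, Finset.sum_range_succ, show (2:ℕ) = 1+1 from rfl, Finset.sum_range_succ, Finset.sum_range_one]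

private lemma range_sum_11 (f : ℕ → ℕ) : ∑ i ∈ Finset.range 11, f i = f 0 + f 1 + f 2 + f 3 + f 4 + f 5 + f 6 + f 7 + f 8 + f 9 + f 10 := by
  rw [show (11:ℕ) = 10+1 from rfl, Finset.sum_range_succ, show (10:ℕ) = 9+1 from rfl, Finset.sum_range_succ, show (9:ℕ) = 8+1 from rfl, Finset.sum_range_succ, show (8:ℕ) = 7+1 from rfl, Finset.sum_range_succ, show (7:ℕ) = 6+1 from rfl, Finset.sum_range_succ, show (6:ℕ) = 5+1 from rfl, Finset.sum_range_succ, show (5:ℕ) = 4+1 from rfl, Finset.sum_range_succ, show (4:ℕ) = 3+1 from rfl, Finset.sum_range_succ, show (3:ℕ) = 2+1 from rfl, Finset.sum_range_succ, show (2:ℕ) = 1+1 from rfl, Finset.sum_range_succ, Finset.sum_range_one]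

private lemma range_sum_12 (f : ℕ → ℕ) : ∑ i ∈ Finset.range 12, f i = f 0 + f 1 + f 2 + f 3 + f 4 + f 5 + f 6 + f 7 + f 8 + f 9 + f 10 + f 11 := by
  rw [show (12:ℕ) = 11+1 from rfl, Finset.sum_range_succ, show (11:ℕ) = 10+1 from rfl, Finset.sum_range_succ, show (10:ℕ) = 9+1 from rfl, Finset.sum_range_succ, show (9:ℕ) = 8+1 from rfl, Finset.sum_range_succ, show (8:ℕ) = 7+1 from rfl, Finset.sum_range_succ, show (7:ℕ) = 6+1 from rfl, Finset.sum_range_succ, show (6:ℕ) = 5+1 from rfl, Finset.sum_range_succ, show (5:ℕ) = 4+1 from rfl, Finset.sum_range_succ, show (4:ℕ) = 3+1 from rfl, Finset.sum_range_succ, show (3:ℕ) = 2+1 from rfl, Finset.sum_range_succ, show (2:ℕ) = 1+1 from rfl, Finset.sum_range_succ, Finset.sum_range_one]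

set_option maxHeartbeats 1600000 in
/-- For the sequence `s₁ = 1`, `s_n = (n−1)·Σ_{j=1}^{n−1} s_j s_{n−j}` (OEIS
A000699), we have `s_{n+1} < (2n+2) s_n` for all `n ≥ 1` and `s_{n+1} > (2n+1) s_n` for all
`n ≥ 4`. -/
theorem A000699_growth_bounds (s : ℕ → ℕ) (h1 : s 1 = 1)
    (hrec : ∀ n, 2 ≤ n → s n = (n - 1) * ∑ j ∈ Finset.Icc 1 (n - 1), s j * s (n - j)) :
    (∀ n, 1 ≤ n → s (n + 1) < (2 * n + 2) * s n) ∧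
    (∀ n, 4 ≤ n → s (n + 1) > (2 * n + 1) * s n) := by
  have hs2 : s 2 = 1 := by
    rw [hrec 2 (by norm_num), show (2:ℕ)-1 = 1 from rfl, sum_Icc_eq_range, Finset.sum_range_one]
    norm_num [h1]
  have hs3 : s 3 = 4 := by
    rw [hrec 3 (by norm_num), show (3:ℕ)-1 = 2 from rfl, sum_Icc_eq_range, range_sum_2]
    norm_num [h1, hs2]
  have hs4 : s 4 = 27 := by
    rw [hrec 4 (by norm_num), show (4:ℕ)-1 = 3 from rfl, sum_Icc_eq_range, range_sum_3]
    norm_num [h1, hs2, hs3]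
  have hs5 : s 5 = 248 := by
    rw [hrec 5 (by norm_num), show (5:ℕ)-1 = 4 from rfl, sum_Icc_eq_range, range_sum_4]
    norm_num [h1, hs2, hs3, hs4]
  have hs6 : s 6 = 2830 := by
    rw [hrec 6 (by norm_num), show (6:ℕ)-1 = 5 from rfl, sum_Icc_eq_range, range_sum_5]
    norm_num [h1, hs2, hs3, hs4, hs5]
  have hs7 : s 7 = 38232 := by
    rw [hrec 7 (by norm_num), show (7:ℕ)-1 = 6 from rfl, sum_Icc_eq_range, range_sum_6]
    norm_num [h1, hs2, hs3, hs4, hs5, hs6]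
  have hs8 : s 8 = 593859 := by
    rw [hrec 8 (by norm_num), show (8:ℕ)-1 = 7 from rfl, sum_Icc_eq_range, range_sum_7]
    norm_num [h1, hs2, hs3, hs4, hs5, hs6, hs7]
  have hs9 : s 9 = 10401712 := by
    rw [hrec 9 (by norm_num), show (9:ℕ)-1 = 8 from rfl, sum_Icc_eq_range, range_sum_8]
    norm_num [h1, hs2, hs3, hs4, hs5, hs6, hs7, hs8]
  have hs10 : s 10 = 202601898 := by
    rw [hrec 10 (by norm_num), show (10:ℕ)-1 = 9 from rfl, sum_Icc_eq_range, range_sum_9]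
    norm_num [h1, hs2, hs3, hs4, hs5, hs6, hs7, hs8, hs9]
  have hs11 : s 11 = 4342263000 := by
    rw [hrec 11 (by norm_num), show (11:ℕ)-1 = 10 from rfl, sum_Icc_eq_range, range_sum_10]
    norm_num [h1, hs2, hs3, hs4, hs5, hs6, hs7, hs8, hs9, hs10]
  have hs12 : s 12 = 101551822350 := by
    rw [hrec 12 (by norm_num), show (12:ℕ)-1 = 11 from rfl, sum_Icc_eq_range, range_sum_11]
    norm_num [h1, hs2, hs3, hs4, hs5, hs6, hs7, hs8, hs9, hs10, hs11]
  have hs13 : s 13 = 2573779506192 := by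
    rw [hrec 13 (by norm_num), show (13:ℕ)-1 = 12 from rfl, sum_Icc_eq_range, range_sum_12]
    norm_num [h1, hs2, hs3, hs4, hs5, hs6, hs7, hs8, hs9, hs10, hs11, hs12]
  have hpos : ∀ m, 1 ≤ m → 1 ≤ s m := by
    intro m
    induction m using Nat.strong_induction_on with
    | _ m ih =>
      intro hm
      rcases Nat.lt_or_ge m 2 with h2 | h2
      · have hm1 : m = 1 := by omega
        rw [hm1, h1]
      · rw [hrec m h2]
        have hmem : 1 ∈ Finset.Icc 1 (m - 1) := by
          rw [Finset.mem_Icc]; omega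
        have hterm : s 1 * s (m - 1) ≤ ∑ j ∈ Finset.Icc 1 (m - 1), s j * s (m - j) :=
          Finset.single_le_sum (f := fun j => s j * s (m - j)) (fun i _ => Nat.zero_le _) hmem
        have h1m : 1 ≤ s (m - 1) := ih (m - 1) (by omega) (by omega)
        have hstep : 1 ≤ s 1 * s (m - 1) := by rw [h1]; omega
        calc 1 = 1 * 1 := by norm_num
          _ ≤ (m - 1) * (s 1 * s (m - 1)) := Nat.mul_le_mul (by omega) hstep
          _ ≤ (m - 1) * ∑ j ∈ Finset.Icc 1 (m - 1), s j * s (m - j) :=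
              mul_le_mul_right hterm _
  have key : ∀ n, (1 ≤ n → s (n + 1) < (2 * n + 2) * s n) ∧
      (4 ≤ n → (2 * n + 1) * s n < s (n + 1)) := by
    intro n
    induction n using Nat.strong_induction_on with
    | _ n ih =>
      rcases Nat.lt_or_ge n 12 with hn | hn
      · interval_cases n <;> refine ⟨fun h => ?_, fun h => ?_⟩ <;>
          first
          | (exfalso; omega)
          | norm_num [h1, hs2, hs3, hs4, hs5, hs6, hs7, hs8, hs9, hs10, hs11, hs12, hs13]
      · obtain ⟨k, rfl⟩ : ∃ k, n = k + 12 := ⟨n - 12, by omega⟩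
        have hU : ∀ j, 1 ≤ j → j ≤ k + 11 → s (j + 1) ≤ (2 * j + 2) * s j :=
          fun j hj1 hj2 => le_of_lt ((ih j (by omega)).1 hj1)
        have hL : ∀ j, 4 ≤ j → j ≤ k + 11 → (2 * j + 1) * s j ≤ s (j + 1) :=
          fun j hj1 hj2 => le_of_lt ((ih j (by omega)).2 hj1)
        -- the shift (log-convexity) lemma
        have shift : ∀ d b, 5 + d ≤ b + 1 → b + d ≤ k + 11 →
            s (5 + d) * s b ≤ s 5 * s (b + d) := by
          intro d
          induction d with
          | zero => intro b _ _; simp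
          | succ d hd =>
            intro b hb1 hb2
            rcases Nat.lt_or_ge (5 + d) b with hlt | hge
            · have step1 : s (5 + d + 1) ≤ (2 * (5 + d) + 2) * s (5 + d) :=
                hU (5 + d) (by omega) (by omega)
              have step2 : (2 * b + 1) * s b ≤ s (b + 1) := hL b (by omega) (by omega)
              calc s (5 + (d + 1)) * s b = s (5 + d + 1) * s b := by
                    rw [show 5 + (d + 1) = 5 + d + 1 by omega]
                _ ≤ ((2 * (5 + d) + 2) * s (5 + d)) * s b := mul_le_mul_left step1 _
                _ = s (5 + d) * ((2 * (5 + d) + 2) * s b) := by ring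
                _ ≤ s (5 + d) * ((2 * b + 1) * s b) :=
                    mul_le_mul_right (mul_le_mul_left (by omega) _) _
                _ ≤ s (5 + d) * s (b + 1) := mul_le_mul_right step2 _
                _ ≤ s 5 * s (b + 1 + d) := hd (b + 1) (by omega) (by omega)
                _ = s 5 * s (b + (d + 1)) := by rw [show b + 1 + d = b + (d + 1) by omega]
            · have hb : b = 5 + d := by omega
              subst hb
              calc s (5 + (d + 1)) * s (5 + d) = s (5 + d) * s (6 + d) := by
                    rw [mul_comm, show 5 + (d + 1) = 6 + d by omega]
                _ ≤ s 5 * s (6 + d + d) := hd (6 + d) (by omega) (by omega)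
                _ = s 5 * s (5 + d + (d + 1)) := by rw [show 6 + d + d = 5 + d + (d + 1) by omega]
        -- decomposition of the big sums
        have hIcc1 : Finset.Icc 1 (k + 12) = Finset.Ioc 0 (k + 12) := by
          ext x; simp only [Finset.mem_Icc, Finset.mem_Ioc]; omega
        have hIcc0 : Finset.Icc 1 (k + 11) = Finset.Ioc 0 (k + 11) := by
          ext x; simp only [Finset.mem_Icc, Finset.mem_Ioc]; omega
        have key1 : ∑ j ∈ Finset.Icc 1 (k + 12), s j * s (k + 13 - j)
            = 2 * s (k + 12) + 2 * s (k + 11) + 8 * s (k + 10) + 54 * s (k + 9)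
              + ∑ j ∈ Finset.Ioc 4 (k + 8), s j * s (k + 13 - j) := by
          rw [hIcc1,
            ← Finset.sum_Ioc_consecutive (fun j => s j * s (k + 13 - j))
              (show (0:ℕ) ≤ 4 by omega) (show (4:ℕ) ≤ k + 12 by omega),
            ← Finset.sum_Ioc_consecutive (fun j => s j * s (k + 13 - j))
              (show (4:ℕ) ≤ k + 8 by omega) (show k + 8 ≤ k + 12 by omega),
            sum_Ioc_eq_range (fun j => s j * s (k + 13 - j)) 0 4,
            sum_Ioc_eq_range (fun j => s j * s (k + 13 - j)) (k + 8) (k + 12)]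
          simp only [show (4:ℕ) - 0 = 4 by omega, show k + 12 - (k + 8) = 4 by omega]
          rw [range_sum_4, range_sum_4]
          simp only [show (0:ℕ) + 1 + 0 = 1 by omega, show (0:ℕ) + 1 + 1 = 2 by omega,
            show (0:ℕ) + 1 + 2 = 3 by omega, show (0:ℕ) + 1 + 3 = 4 by omega,
            show k + 8 + 1 + 0 = k + 9 by omega, show k + 8 + 1 + 1 = k + 10 by omega,
            show k + 8 + 1 + 2 = k + 11 by omega, show k + 8 + 1 + 3 = k + 12 by omega,
            show k + 13 - 1 = k + 12 by omega, show k + 13 - 2 = k + 11 by omega,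
            show k + 13 - 3 = k + 10 by omega, show k + 13 - 4 = k + 9 by omega,
            show k + 13 - (k + 9) = 4 by omega, show k + 13 - (k + 10) = 3 by omega,
            show k + 13 - (k + 11) = 2 by omega, show k + 13 - (k + 12) = 1 by omega,
            h1, hs2, hs3, hs4]
          ring
        have key0 : ∑ j ∈ Finset.Icc 1 (k + 11), s j * s (k + 12 - j)
            = 2 * s (k + 11) + 2 * s (k + 10) + 8 * s (k + 9) + 54 * s (k + 8)
              + ∑ j ∈ Finset.Ioc 4 (k + 7), s j * s (k + 12 - j) := by
          rw [hIcc0,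
            ← Finset.sum_Ioc_consecutive (fun j => s j * s (k + 12 - j))
              (show (0:ℕ) ≤ 4 by omega) (show (4:ℕ) ≤ k + 11 by omega),
            ← Finset.sum_Ioc_consecutive (fun j => s j * s (k + 12 - j))
              (show (4:ℕ) ≤ k + 7 by omega) (show k + 7 ≤ k + 11 by omega),
            sum_Ioc_eq_range (fun j => s j * s (k + 12 - j)) 0 4,
            sum_Ioc_eq_range (fun j => s j * s (k + 12 - j)) (k + 7) (k + 11)]
          simp only [show (4:ℕ) - 0 = 4 by omega, show k + 11 - (k + 7) = 4 by omega]
          rw [range_sum_4, range_sum_4]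
          simp only [show (0:ℕ) + 1 + 0 = 1 by omega, show (0:ℕ) + 1 + 1 = 2 by omega,
            show (0:ℕ) + 1 + 2 = 3 by omega, show (0:ℕ) + 1 + 3 = 4 by omega,
            show k + 7 + 1 + 0 = k + 8 by omega, show k + 7 + 1 + 1 = k + 9 by omega,
            show k + 7 + 1 + 2 = k + 10 by omega, show k + 7 + 1 + 3 = k + 11 by omega,
            show k + 12 - 1 = k + 11 by omega, show k + 12 - 2 = k + 10 by omega,
            show k + 12 - 3 = k + 9 by omega, show k + 12 - 4 = k + 8 by omega,
            show k + 12 - (k + 8) = 4 by omega, show k + 12 - (k + 9) = 3 by omega,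
            show k + 12 - (k + 10) = 2 by omega, show k + 12 - (k + 11) = 1 by omega,
            h1, hs2, hs3, hs4]
          ring
        -- bounds for the middle sums
        have term1 : ∀ j ∈ Finset.Ioc 4 (k + 8), s j * s (k + 13 - j) ≤ 248 * s (k + 8) := by
          intro j hj
          rw [Finset.mem_Ioc] at hj
          rw [← hs5]
          rcases le_total j (k + 13 - j) with h | h
          · have hsh := shift (j - 5) (k + 13 - j) (by omega) (by omega)
            rw [show 5 + (j - 5) = j by omega, show k + 13 - j + (j - 5) = k + 8 by omega] at hsh
            exact hsh
          · have hsh := shift (k + 8 - j) j (by omega) (by omega)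
            rw [show 5 + (k + 8 - j) = k + 13 - j by omega,
              show j + (k + 8 - j) = k + 8 by omega] at hsh
            calc s j * s (k + 13 - j) = s (k + 13 - j) * s j := mul_comm _ _
              _ ≤ s 5 * s (k + 8) := hsh
        have term0 : ∀ j ∈ Finset.Ioc 4 (k + 7), s j * s (k + 12 - j) ≤ 248 * s (k + 7) := by
          intro j hj
          rw [Finset.mem_Ioc] at hj
          rw [← hs5]
          rcases le_total j (k + 12 - j) with h | h
          · have hsh := shift (j - 5) (k + 12 - j) (by omega) (by omega)
            rw [show 5 + (j - 5) = j by omega, show k + 12 - j + (j - 5) = k + 7 by omega] at hsh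
            exact hsh
          · have hsh := shift (k + 7 - j) j (by omega) (by omega)
            rw [show 5 + (k + 7 - j) = k + 12 - j by omega,
              show j + (k + 7 - j) = k + 7 by omega] at hsh
            calc s j * s (k + 12 - j) = s (k + 12 - j) * s j := mul_comm _ _
              _ ≤ s 5 * s (k + 7) := hsh
        have hT1 : (∑ j ∈ Finset.Ioc 4 (k + 8), s j * s (k + 13 - j))
            ≤ (k + 4) * (248 * s (k + 8)) := by
          have h := Finset.sum_le_card_nsmul (Finset.Ioc 4 (k + 8)) _ _ term1
          rwa [Nat.card_Ioc, show k + 8 - 4 = k + 4 by omega, smul_eq_mul] at h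
        have hT0 : (∑ j ∈ Finset.Ioc 4 (k + 7), s j * s (k + 12 - j))
            ≤ (k + 3) * (248 * s (k + 7)) := by
          have h := Finset.sum_le_card_nsmul (Finset.Ioc 4 (k + 7)) _ _ term0
          rwa [Nat.card_Ioc, show k + 7 - 4 = k + 3 by omega, smul_eq_mul] at h
        -- recurrence equations
        have e1 : s (k + 13) = (k + 12) * (2 * s (k + 12) + 2 * s (k + 11) + 8 * s (k + 10)
            + 54 * s (k + 9) + ∑ j ∈ Finset.Ioc 4 (k + 8), s j * s (k + 13 - j)) := by
          rw [hrec (k + 13) (by omega)]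
          simp only [show k + 13 - 1 = k + 12 by omega]
          rw [key1]
        have e0 : s (k + 12) = (k + 11) * (2 * s (k + 11) + 2 * s (k + 10) + 8 * s (k + 9)
            + 54 * s (k + 8) + ∑ j ∈ Finset.Ioc 4 (k + 7), s j * s (k + 12 - j)) := by
          rw [hrec (k + 12) (by omega)]
          simp only [show k + 12 - 1 = k + 11 by omega]
          rw [key0]
        -- neighbor bounds
        have b11 : (2 * k + 21) * s (k + 10) ≤ s (k + 11) := by
          have h := hL (k + 10) (by omega) (by omega)
          rw [show 2 * (k + 10) + 1 = 2 * k + 21 by omega, show k + 10 + 1 = k + 11 by omega] at h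
          exact h
        have b10 : (2 * k + 19) * s (k + 9) ≤ s (k + 10) := by
          have h := hL (k + 9) (by omega) (by omega)
          rw [show 2 * (k + 9) + 1 = 2 * k + 19 by omega, show k + 9 + 1 = k + 10 by omega] at h
          exact h
        have b9 : (2 * k + 17) * s (k + 8) ≤ s (k + 9) := by
          have h := hL (k + 8) (by omega) (by omega)
          rw [show 2 * (k + 8) + 1 = 2 * k + 17 by omega, show k + 8 + 1 = k + 9 by omega] at h
          exact h
        have b8 : (2 * k + 15) * s (k + 7) ≤ s (k + 8) := by
          have h := hL (k + 7) (by omega) (by omega)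
          rw [show 2 * (k + 7) + 1 = 2 * k + 15 by omega, show k + 7 + 1 = k + 8 by omega] at h
          exact h
        have pX : 1 ≤ s (k + 10) := hpos _ (by omega)
        have pW : 1 ≤ s (k + 11) := hpos _ (by omega)
        set T1 := ∑ j ∈ Finset.Ioc 4 (k + 8), s j * s (k + 13 - j) with hT1def
        set T0 := ∑ j ∈ Finset.Ioc 4 (k + 7), s j * s (k + 12 - j) with hT0def
        set V := s (k + 12) with hVdef
        set W := s (k + 11) with hWdef
        set X := s (k + 10) with hXdef
        set Y := s (k + 9) with hYdef
        set Z := s (k + 8) with hZdef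
        set Z7 := s (k + 7) with hZ7def
        -- auxiliary inequalities for the upper bound
        have u1 : (54 * k + 648) * Y ≤ 54 * X := by
          calc (54 * k + 648) * Y ≤ (54 * (2 * k + 19)) * Y := mul_le_mul_left (by omega) _
            _ = 54 * ((2 * k + 19) * Y) := by ring
            _ ≤ 54 * X := mul_le_mul_right b10 _
        have u2 : (k + 12) * T1 ≤ 248 * X := by
          calc (k + 12) * T1 ≤ (k + 12) * ((k + 4) * (248 * Z)) := mul_le_mul_right hT1 _
            _ = (248 * ((k + 12) * (k + 4))) * Z := by ring
            _ ≤ (248 * ((2 * k + 19) * (2 * k + 17))) * Z :=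
                mul_le_mul_left (mul_le_mul_right (Nat.mul_le_mul (by omega) (by omega)) _) _
            _ = (248 * (2 * k + 19)) * ((2 * k + 17) * Z) := by ring
            _ ≤ (248 * (2 * k + 19)) * Y := mul_le_mul_right b9 _
            _ = 248 * ((2 * k + 19) * Y) := by ring
            _ ≤ 248 * X := mul_le_mul_right b10 _
        have u3 : (4 * k + 355) * X ≤ (2 * k + 20) * W := by
          have h355 : 4 * k + 355 ≤ (2 * k + 20) * (2 * k + 21) := by
            calc 4 * k + 355 ≤ (2 * k + 20) * 21 := by omega
              _ ≤ (2 * k + 20) * (2 * k + 21) := mul_le_mul_right (by omega) _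
          calc (4 * k + 355) * X ≤ ((2 * k + 20) * (2 * k + 21)) * X :=
                mul_le_mul_left h355 _
            _ = (2 * k + 20) * ((2 * k + 21) * X) := by ring
            _ ≤ (2 * k + 20) * W := mul_le_mul_right b11 _
        have u4 : (4 * k + 44) * W + (4 * k + 44) * X ≤ 2 * V := by
          have hmono : 2 * W + 2 * X ≤ 2 * W + 2 * X + 8 * Y + 54 * Z + T0 := by omega
          calc (4 * k + 44) * W + (4 * k + 44) * X = 2 * ((k + 11) * (2 * W + 2 * X)) := by ring
            _ ≤ 2 * ((k + 11) * (2 * W + 2 * X + 8 * Y + 54 * Z + T0)) :=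
                mul_le_mul_right (mul_le_mul_right hmono _) _
            _ = 2 * V := by rw [e0]
        -- auxiliary inequalities for the lower bound
        have l1 : (54 * k + 594) * Z ≤ 54 * Y := by
          calc (54 * k + 594) * Z ≤ (54 * (2 * k + 17)) * Z := mul_le_mul_left (by omega) _
            _ = 54 * ((2 * k + 17) * Z) := by ring
            _ ≤ 54 * Y := mul_le_mul_right b9 _
        have l2 : (k + 11) * T0 ≤ 248 * Y := by
          calc (k + 11) * T0 ≤ (k + 11) * ((k + 3) * (248 * Z7)) := mul_le_mul_right hT0 _
            _ = (248 * ((k + 11) * (k + 3))) * Z7 := by ring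
            _ ≤ (248 * ((2 * k + 17) * (2 * k + 15))) * Z7 :=
                mul_le_mul_left (mul_le_mul_right (Nat.mul_le_mul (by omega) (by omega)) _) _
            _ = (248 * (2 * k + 17)) * ((2 * k + 15) * Z7) := by ring
            _ ≤ (248 * (2 * k + 17)) * Z := mul_le_mul_right b8 _
            _ = 248 * ((2 * k + 17) * Z) := by ring
            _ ≤ 248 * Y := mul_le_mul_right b9 _
        have l3 : V ≤ (2 * k + 22) * W + (2 * k + 22) * X + (8 * k + 390) * Y := by
          calc V = (2 * k + 22) * W + (2 * k + 22) * X + (8 * k + 88) * Y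
                + ((54 * k + 594) * Z + (k + 11) * T0) := by rw [e0]; ring
            _ ≤ (2 * k + 22) * W + (2 * k + 22) * X + (8 * k + 88) * Y + (54 * Y + 248 * Y) :=
                Nat.add_le_add_left (Nat.add_le_add l1 l2) _
            _ = (2 * k + 22) * W + (2 * k + 22) * X + (8 * k + 390) * Y := by ring
        constructor
        · intro _
          rw [show k + 12 + 1 = k + 13 by omega, e1, show 2 * (k + 12) + 2 = 2 * k + 26 by omega]
          calc (k + 12) * (2 * V + 2 * W + 8 * X + 54 * Y + T1)
              = (2 * k + 24) * V + ((2 * k + 24) * W + ((8 * k + 96) * X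
                + ((54 * k + 648) * Y + (k + 12) * T1))) := by ring
            _ ≤ (2 * k + 24) * V + ((2 * k + 24) * W + ((8 * k + 96) * X
                + (54 * X + 248 * X))) :=
                Nat.add_le_add_left (Nat.add_le_add_left (Nat.add_le_add_left
                  (Nat.add_le_add u1 u2) _) _) _
            _ = (2 * k + 24) * V + ((2 * k + 24) * W + ((4 * k + 44) * X
                + (4 * k + 354) * X)) := by ring
            _ < (2 * k + 24) * V + ((2 * k + 24) * W + ((4 * k + 44) * X
                + (4 * k + 355) * X)) := by
                have hx : (4 * k + 354) * X < (4 * k + 355) * X := by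
                  have he : (4 * k + 355) * X = (4 * k + 354) * X + X := by ring
                  rw [he]
                  exact Nat.lt_add_of_pos_right (by omega)
                exact Nat.add_lt_add_left (Nat.add_lt_add_left (Nat.add_lt_add_left hx _) _) _
            _ ≤ (2 * k + 24) * V + ((2 * k + 24) * W + ((4 * k + 44) * X
                + (2 * k + 20) * W)) :=
                Nat.add_le_add_left (Nat.add_le_add_left (Nat.add_le_add_left u3 _) _) _
            _ = (2 * k + 24) * V + ((4 * k + 44) * W + (4 * k + 44) * X) := by ring
            _ ≤ (2 * k + 24) * V + 2 * V := Nat.add_le_add_left u4 _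
            _ = (2 * k + 26) * V := by ring
        · intro _
          rw [show k + 12 + 1 = k + 13 by omega, e1, show 2 * (k + 12) + 1 = 2 * k + 25 by omega]
          calc (2 * k + 25) * V = (2 * k + 24) * V + V := by ring
            _ ≤ (2 * k + 24) * V + ((2 * k + 22) * W + (2 * k + 22) * X + (8 * k + 390) * Y) :=
                Nat.add_le_add_left l3 _
            _ < (2 * k + 24) * V + ((2 * k + 24) * W + ((8 * k + 96) * X
                + (54 * k + 648) * Y)) := by
                have c1 : (2 * k + 22) * W < (2 * k + 24) * W := by
                  have he : (2 * k + 24) * W = (2 * k + 22) * W + 2 * W := by ring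
                  rw [he]
                  exact Nat.lt_add_of_pos_right (by omega)
                have c2 : (2 * k + 22) * X ≤ (8 * k + 96) * X := mul_le_mul_left (by omega) _
                have c3 : (8 * k + 390) * Y ≤ (54 * k + 648) * Y := mul_le_mul_left (by omega) _
                have hc : (2 * k + 22) * W + (2 * k + 22) * X + (8 * k + 390) * Y
                    < (2 * k + 24) * W + ((8 * k + 96) * X + (54 * k + 648) * Y) := by
                  calc (2 * k + 22) * W + (2 * k + 22) * X + (8 * k + 390) * Y
                      = (2 * k + 22) * W + ((2 * k + 22) * X + (8 * k + 390) * Y) := by ring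
                    _ < (2 * k + 24) * W + ((8 * k + 96) * X + (54 * k + 648) * Y) :=
                        add_lt_add_of_lt_of_le c1 (Nat.add_le_add c2 c3)
                exact Nat.add_lt_add_left hc _
            _ ≤ (k + 12) * (2 * V + 2 * W + 8 * X + 54 * Y + T1) := by
                have he : (2 * k + 24) * V + ((2 * k + 24) * W + ((8 * k + 96) * X
                    + (54 * k + 648) * Y)) = (k + 12) * (2 * V + 2 * W + 8 * X + 54 * Y) := by
                  ring
                rw [he]
                exact mul_le_mul_right (by omega) _
  exact ⟨fun n hn => (key n).1 hn, fun n hn => (key n).2 hn⟩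
end

section
/- Let S_k be the set of finite sets {(a_1,t_1),…,(a_j,t_j)} of pairs of positive integers with the a_i distinct, a_i ≥ 2, and Σ a_i t_i = k. For S ∈ S_k, the number of generalized subdiagonal Dyck paths on a (k − Σt_i)×(k − Σt_i) grid composed of t_i horizontal steps of length a_i − 1 (for each i) and k − Σt_i unit vertical steps, no vertical step above the diagonal, equals k!/((Π_i t_i!)·(k+1 − Σ_i t_i)!). -/
open Finset

/-- A list of steps (`0` = unit vertical step, `v ≥ 1` = horizontal step of length `v`)
describes a subdiagonal generalized Dyck path: at every vertical step, the path stays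
weakly below the diagonal, i.e. the number of vertical steps so far plus one is at most the
total horizontal length traversed so far. -/
def IsSubdiagonalDyck (L : List ℕ) : Prop :=
  ∀ i, i < L.length → L.getD i 1 = 0 →
    (L.take i).count 0 + 1 ≤ (L.take i).sum

/-!
Encode a path as its list of steps, a vertical step `0` weighing `-1` and a horizontal step of
length `v` weighing `v`; the path is subdiagonal iff all its prefix weights are nonnegative.
Appending one extra vertical step to the step multiset `s` gives words on `0 ::ₘ s` of total
weight `-1`, and by Raney's cycle lemma exactly one of the `k + 1` cyclic shifts of such a word
has nonnegative proper prefix weights; those words are precisely the subdiagonal paths followed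
by the extra step. Hence `(k + 1) · #paths` is the number `(k + 1)! / ((m + 1)! ∏ tᵢ!)` of
arrangements of `0 ::ₘ s`, where `m = k - Σ tᵢ` is the number of vertical steps.
-/

open scoped Nat

namespace List

section AddMonoid

variable {M : Type*} [AddMonoid M]

theorem sum_take_add_sum_take_rotate (w : List M) {r i : ℕ} (h : r + i ≤ w.length) :
    (w.take r).sum + ((w.rotate r).take i).sum = (w.take (r + i)).sum := by
  rw [rotate_eq_drop_append_take (by omega), take_append_of_le_length (by rw [length_drop]; omega),
    take_add, sum_append]

theorem sum_take_rotate_length_sub_add (w : List M) {r j : ℕ} (h : j ≤ r)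
    (hr : r ≤ w.length) :
    ((w.rotate r).take (w.length - r + j)).sum = (w.drop r).sum + (w.take j).sum := by
  rw [rotate_eq_drop_append_take hr, ← length_drop, take_length_add_append, take_take,
    min_eq_left h, sum_append]

end AddMonoid

def ProperPrefixSumsNonneg (w : List ℤ) : Prop := ∀ i < w.length, 0 ≤ (w.take i).sum

instance : DecidablePred ProperPrefixSumsNonneg :=
  fun w => inferInstanceAs (Decidable (∀ i < w.length, 0 ≤ (w.take i).sum))

theorem properPrefixSumsNonneg_append_singleton (w : List ℤ) (x : ℤ) :
    ProperPrefixSumsNonneg (w ++ [x]) ↔ ∀ i ≤ w.length, 0 ≤ (w.take i).sum := by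
  simp only [ProperPrefixSumsNonneg, length_append, length_singleton, Nat.lt_succ_iff]
  exact forall₂_congr fun i hi => by rw [take_append_of_le_length hi]

/-- Raney's cycle lemma: the good shifts start exactly at the first minimum of the prefix sums. -/
theorem properPrefixSumsNonneg_rotate_iff {w : List ℤ} (hw : w.sum = -1) {r : ℕ}
    (hr : r < w.length) :
    ProperPrefixSumsNonneg (w.rotate r) ↔
      (∀ j < w.length, (w.take r).sum ≤ (w.take j).sum) ∧
        ∀ j < r, (w.take r).sum < (w.take j).sum := by
  have hdrop : (w.drop r).sum = -1 - (w.take r).sum := by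
    rw [← hw, ← take_append_drop r w, sum_append, take_append_drop]; ring
  have hwrap (j) (hj : j ≤ r) := sum_take_rotate_length_sub_add w hj hr.le
  rw [hdrop] at hwrap
  constructor
  · intro h
    have hbefore : ∀ j < r, (w.take r).sum < (w.take j).sum := fun j hj => by
      have := h (w.length - r + j) (by rw [length_rotate]; omega)
      linarith [hwrap j hj.le]
    refine ⟨fun j hj => ?_, hbefore⟩
    rcases lt_or_ge j r with hjr | hjr
    · exact (hbefore j hjr).le
    · have := h (j - r) (by rw [length_rotate]; omega)
      have := sum_take_add_sum_take_rotate w (show r + (j - r) ≤ w.length by omega)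
      rw [Nat.add_sub_cancel' hjr] at this
      linarith
  · rintro ⟨hmin, hfirst⟩ i hi
    rw [length_rotate] at hi
    rcases lt_or_ge (r + i) w.length with hri | hri
    · have := sum_take_add_sum_take_rotate w hri.le
      linarith [hmin (r + i) hri]
    · obtain ⟨j, rfl⟩ : ∃ j, i = w.length - r + j := ⟨i - (w.length - r), by omega⟩
      linarith [hwrap j (by omega), hfirst j (by omega)]

theorem exists_rotate_properPrefixSumsNonneg {w : List ℤ} (hw : w.sum = -1) :
    ∃ r < w.length, ProperPrefixSumsNonneg (w.rotate r) := by
  have hlen : 0 < w.length := length_pos_iff.2 (by rintro rfl; simp at hw)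
  obtain ⟨m, hm, hmin⟩ := (Finset.range w.length).exists_min_image (fun j => (w.take j).sum)
    ⟨0, Finset.mem_range.2 hlen⟩
  have hex : ∃ r, r < w.length ∧ (w.take r).sum = (w.take m).sum :=
    ⟨m, Finset.mem_range.1 hm, rfl⟩
  classical
  obtain ⟨hr, hrm⟩ := Nat.find_spec hex
  refine ⟨Nat.find hex, hr, (properPrefixSumsNonneg_rotate_iff hw hr).2 ⟨?_, ?_⟩⟩
  · exact fun j hj => hrm.trans_le (hmin j (Finset.mem_range.2 hj))
  · intro j hj
    exact lt_of_le_of_ne (hrm.trans_le (hmin j (Finset.mem_range.2 (by omega))))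
      fun h => Nat.find_min hex hj ⟨by omega, by rw [← h, hrm]⟩

theorem eq_of_properPrefixSumsNonneg_rotate {w : List ℤ} (hw : w.sum = -1) {r r' : ℕ}
    (hr : r < w.length) (hr' : r' < w.length) (h : ProperPrefixSumsNonneg (w.rotate r))
    (h' : ProperPrefixSumsNonneg (w.rotate r')) : r = r' := by
  rw [properPrefixSumsNonneg_rotate_iff hw hr] at h
  rw [properPrefixSumsNonneg_rotate_iff hw hr'] at h'
  rcases lt_trichotomy r r' with hlt | heq | hgt
  · exact absurd (h'.2 r hlt) (not_lt.2 (h.1 r' hr'))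
  · exact heq
  · exact absurd (h.2 r' hgt) (not_lt.2 (h'.1 r hr))

end List

namespace Finset

theorem card_eq_mul_card_filter_of_unique_rotate {α : Type*}
    (A : Finset (List α)) (n : ℕ) (p : List α → Prop) [DecidablePred p]
    (hlen : ∀ w ∈ A, w.length = n) (hrot : ∀ w ∈ A, ∀ r, w.rotate r ∈ A)
    (hex : ∀ w ∈ A, ∃ r < n, p (w.rotate r))
    (huniq : ∀ w ∈ A, ∀ r < n, ∀ r' < n, p (w.rotate r) → p (w.rotate r') → r = r') :
    #A = n * #(A.filter p) := by
  rw [mul_comm, ← card_range n, ← card_product]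
  refine (card_bij (fun gr _ => gr.1.rotate gr.2) (fun gr hgr => ?_) ?_ ?_).symm
  · simp only [mem_product, mem_filter] at hgr
    exact hrot _ hgr.1.1 _
  · rintro ⟨g, r⟩ hgr ⟨g', r'⟩ hgr' (hrot' : g.rotate r = g'.rotate r')
    simp only [mem_product, mem_filter, mem_range] at hgr hgr'
    wlog hle : r ≤ r' generalizing g r g' r'
    · exact (this g' r' g r hrot'.symm hgr' hgr (by omega)).symm
    have hg : g = g'.rotate (r' - r) := by
      rw [← List.rotate_eq_rotate (n := r), hrot', List.rotate_rotate, Nat.sub_add_cancel hle]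
    have : 0 = r' - r := huniq g' hgr'.1.1 0 (by omega) (r' - r) (by omega)
      (by rw [List.rotate_zero]; exact hgr'.1.2) (hg ▸ hgr.1.2)
    obtain rfl : r = r' := by omega
    simp [hg]
  · intro w hw
    obtain ⟨r, hr, hpr⟩ := hex w hw
    have hwn : (w.rotate r).length = n := (w.length_rotate r).trans (hlen w hw)
    refine ⟨(w.rotate r, (n - r) % n), ?_, ?_⟩
    · simp only [mem_product, mem_filter, mem_range]
      exact ⟨⟨hrot w hw r, hpr⟩, Nat.mod_lt _ (by omega)⟩
    · rw [← hwn, List.rotate_mod, hwn, List.rotate_rotate, Nat.add_sub_cancel' hr.le,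
        ← hlen w hw, List.rotate_length]

end Finset

namespace Multiset

variable {α : Type*} [DecidableEq α]

def arrangements (s : Multiset α) : Finset (List α) := s.lists.toFinset

@[simp]
theorem mem_arrangements {s : Multiset α} {l : List α} :
    l ∈ s.arrangements ↔ (l : Multiset α) = s := by
  rw [arrangements, mem_toFinset, mem_lists_iff, quot_mk_to_coe, eq_comm]

theorem coe_filter_arrangements (s : Multiset α) (p : List α → Prop) [DecidablePred p] :
    ↑(s.arrangements.filter p) = {l : List α | (l : Multiset α) = s ∧ p l} :=
  Set.ext fun _ => by simp

theorem arrangements_zero : (0 : Multiset α).arrangements = {[]} :=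
  Finset.ext fun _ => by simp

theorem arrangements_eq_biUnion {s : Multiset α} (hs : s ≠ 0) :
    s.arrangements = s.toFinset.biUnion fun a => (s.erase a).arrangements.image (a :: ·) := by
  ext (_ | ⟨a, l⟩)
  · simp [Ne.symm hs]
  · simp only [mem_arrangements, Finset.mem_biUnion, mem_toFinset, Finset.mem_image,
      List.cons.injEq]
    constructor
    · rintro rfl
      exact ⟨a, mem_cons_self a l, l, by simp, rfl, rfl⟩
    · rintro ⟨b, hb, l', hl', rfl, rfl⟩
      rw [← cons_coe, hl', cons_erase hb]

theorem prod_factorial_count_eq_count_mul_erase {s : Multiset α} {a : α} (ha : a ∈ s)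
    {T : Finset α} (haT : a ∈ T) :
    ∏ x ∈ T, (s.count x)! = s.count a * ∏ x ∈ T, ((s.erase a).count x)! := by
  rw [← Finset.mul_prod_erase T _ haT, ← Finset.mul_prod_erase T _ haT, count_erase_self,
    ← mul_assoc, Nat.mul_factorial_pred (count_ne_zero.2 ha)]
  congr 1
  exact Finset.prod_congr rfl fun x hx => by rw [count_erase_of_ne (Finset.ne_of_mem_erase hx)]

theorem card_arrangements_mul_prod_factorial_count (s : Multiset α) {T : Finset α}
    (hT : s.toFinset ⊆ T) : #s.arrangements * ∏ x ∈ T, (s.count x)! = (card s)! := by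
  induction s using strongInductionOn with
  | ih s ih =>
  rcases eq_or_ne s 0 with rfl | hs
  · simp [arrangements_zero]
  have hdisj : (s.toFinset : Set α).PairwiseDisjoint
      fun a => (s.erase a).arrangements.image (a :: ·) := by
    intro a _ b _ hab
    simp only [Function.onFun, Finset.disjoint_left, Finset.mem_image]
    rintro _ ⟨l, _, rfl⟩ ⟨l', _, h⟩
    exact hab (List.cons.inj h).1.symm
  have herase (a) (ha : a ∈ s.toFinset) :
      #((s.erase a).arrangements.image (a :: ·)) * ∏ x ∈ T, (s.count x)! =
        s.count a * (card s - 1)! := by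
    rw [mem_toFinset] at ha
    rw [Finset.card_image_of_injective _ List.cons_injective,
      prod_factorial_count_eq_count_mul_erase ha (hT (mem_toFinset.2 ha)), mul_left_comm,
      ih _ (erase_lt.2 ha) ((toFinset_subset.2 (erase_subset a s)).trans hT),
      card_erase_of_mem ha, Nat.pred_eq_sub_one]
  rw [arrangements_eq_biUnion hs, Finset.card_biUnion hdisj, Finset.sum_mul,
    Finset.sum_congr rfl herase, ← Finset.sum_mul, toFinset_sum_count_eq,
    Nat.mul_factorial_pred (mt card_eq_zero.1 hs)]

theorem count_bind_replicate {ι : Type*} {S : Finset ι} {f : ι → α} (hf : Set.InjOn f S)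
    (n : ι → ℕ) {i : ι} (hi : i ∈ S) :
    (S.val.bind fun j => replicate (n j) (f j)).count (f i) = n i := by
  rw [count_bind, Finset.sum_map_val, Finset.sum_eq_single_of_mem i hi
    fun j hj hji => count_eq_zero.2 fun h => hji (hf hi hj (eq_of_mem_replicate h)).symm,
    count_replicate_self]

end Multiset

def stepWeight (v : ℕ) : ℤ := if v = 0 then -1 else v

@[simp]
theorem stepWeight_zero : stepWeight 0 = -1 := rfl

theorem one_le_stepWeight {v : ℕ} (hv : v ≠ 0) : 1 ≤ stepWeight v := by
  simp only [stepWeight, if_neg hv]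
  exact_mod_cast Nat.one_le_iff_ne_zero.2 hv

theorem sum_map_stepWeight (l : List ℕ) : (l.map stepWeight).sum = l.sum - l.count 0 := by
  induction l with
  | nil => simp
  | cons v l ih =>
    rcases eq_or_ne v 0 with rfl | hv
    · rw [List.map_cons, List.sum_cons, List.sum_cons, ih, stepWeight_zero, List.count_cons_self]
      push_cast
      ring
    · rw [List.map_cons, List.sum_cons, List.sum_cons, ih, List.count_cons_of_ne hv, stepWeight,
        if_neg hv]
      push_cast
      ring

instance : DecidablePred IsSubdiagonalDyck :=
  fun L => inferInstanceAs (Decidable (∀ i, i < L.length → _))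

theorem isSubdiagonalDyck_iff (L : List ℕ) :
    IsSubdiagonalDyck L ↔ ∀ i ≤ L.length, 0 ≤ ((L.map stepWeight).take i).sum := by
  have hstep (i) (hi : i < L.length) : ((L.map stepWeight).take (i + 1)).sum =
      ((L.map stepWeight).take i).sum + stepWeight L[i] := by
    rw [List.sum_take_succ _ _ (by simpa), List.getElem_map]
  have hexcess (i) :
      ((L.map stepWeight).take i).sum = (L.take i).sum - (L.take i).count 0 := by
    rw [← List.map_take, sum_map_stepWeight]
  rw [IsSubdiagonalDyck]
  constructor
  · intro h i
    induction i with
    | zero => simp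
    | succ i ih =>
      intro hi
      rw [hstep i hi]
      rcases eq_or_ne L[i] 0 with h0 | h0
      · have := h i hi (by rwa [List.getD_eq_getElem _ _ hi])
        rw [h0, stepWeight_zero, hexcess]
        omega
      · linarith [ih (by omega), one_le_stepWeight h0]
  · intro h i hi h0
    rw [List.getD_eq_getElem _ _ hi] at h0
    have := h (i + 1) hi
    rw [hstep i hi, h0, stepWeight_zero, hexcess] at this
    omega

theorem isSubdiagonalDyck_iff_append_zero (L : List ℕ) :
    IsSubdiagonalDyck L ↔ ((L ++ [0]).map stepWeight).ProperPrefixSumsNonneg := by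
  rw [isSubdiagonalDyck_iff, List.map_append, List.map_singleton,
    List.properPrefixSumsNonneg_append_singleton, List.length_map]

theorem sum_map_stepWeight_of_coe_eq_cons_zero {s : Multiset ℕ} (hs : s.sum = s.count 0)
    {g : List ℕ} (hg : (g : Multiset ℕ) = 0 ::ₘ s) : (g.map stepWeight).sum = -1 := by
  rw [sum_map_stepWeight, ← Multiset.sum_coe, ← Multiset.coe_count, hg, Multiset.sum_cons,
    Multiset.count_cons_self, hs]
  push_cast
  ring

theorem filter_arrangements_cons_zero {s : Multiset ℕ} (hs : s.sum = s.count 0) :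
    (0 ::ₘ s).arrangements.filter (fun g => (g.map stepWeight).ProperPrefixSumsNonneg) =
      (s.arrangements.filter IsSubdiagonalDyck).image (· ++ [0]) := by
  ext g
  simp only [mem_filter, mem_image, Multiset.mem_arrangements]
  constructor
  · rintro ⟨hg, hgood⟩
    obtain rfl | ⟨L, x, rfl⟩ := g.eq_nil_or_concat'
    · simp at hg
    have hsum := sum_map_stepWeight_of_coe_eq_cons_zero hs hg
    have hx : x = 0 := by
      by_contra hx
      rw [List.map_append, List.map_singleton] at hgood hsum
      have := (List.properPrefixSumsNonneg_append_singleton _ _).1 hgood _ le_rfl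
      rw [List.take_length] at this
      rw [List.sum_append, List.sum_singleton] at hsum
      linarith [one_le_stepWeight hx]
    subst hx
    refine ⟨L, ⟨?_, (isSubdiagonalDyck_iff_append_zero L).2 hgood⟩, rfl⟩
    rwa [Multiset.coe_eq_coe.2 (List.perm_append_singleton 0 L), ← Multiset.cons_coe,
      Multiset.cons_inj_right] at hg
  · rintro ⟨L, ⟨hL, hdyck⟩, rfl⟩
    refine ⟨?_, (isSubdiagonalDyck_iff_append_zero L).1 hdyck⟩
    rw [Multiset.coe_eq_coe.2 (List.perm_append_singleton 0 L), ← Multiset.cons_coe, hL]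

theorem card_filter_isSubdiagonalDyck_mul_prod_factorial_count {s : Multiset ℕ}
    (hs : s.sum = s.count 0) {T : Finset ℕ} (hT : (0 ::ₘ s).toFinset ⊆ T) :
    #(s.arrangements.filter IsSubdiagonalDyck) * ∏ x ∈ T, ((0 ::ₘ s).count x)! =
      (Multiset.card s)! := by
  set A := (0 ::ₘ s).arrangements
  have hlen (w) (hw : w ∈ A) : (w.map stepWeight).length = Multiset.card s + 1 := by
    rw [Multiset.mem_arrangements] at hw
    rw [List.length_map, ← Multiset.coe_card, hw, Multiset.card_cons]
  have hsum (w) (hw : w ∈ A) : (w.map stepWeight).sum = -1 :=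
    sum_map_stepWeight_of_coe_eq_cons_zero hs (Multiset.mem_arrangements.1 hw)
  have hcycle : #A = (Multiset.card s + 1) *
      #(A.filter fun g => (g.map stepWeight).ProperPrefixSumsNonneg) := by
    refine card_eq_mul_card_filter_of_unique_rotate A _ _
      (fun w hw => List.length_map stepWeight ▸ hlen w hw) (fun w hw r => ?_)
      (fun w hw => ?_) (fun w hw r hr r' hr' => ?_)
    · rw [Multiset.mem_arrangements] at hw ⊢
      rw [← hw, Multiset.coe_eq_coe]
      exact w.rotate_perm r
    · simp only [List.map_rotate, ← hlen w hw]
      exact List.exists_rotate_properPrefixSumsNonneg (hsum w hw)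
    · simp only [List.map_rotate]
      rw [← hlen w hw] at hr hr'
      exact List.eq_of_properPrefixSumsNonneg_rotate (hsum w hw) hr hr'
  have hgood : #(A.filter fun g => (g.map stepWeight).ProperPrefixSumsNonneg) =
      #(s.arrangements.filter IsSubdiagonalDyck) := by
    rw [filter_arrangements_cons_zero hs, card_image_of_injective _ (List.append_left_injective _)]
  have hmult := Multiset.card_arrangements_mul_prod_factorial_count (0 ::ₘ s) hT
  rw [hcycle, hgood, Multiset.card_cons, Nat.factorial_succ, mul_assoc] at hmult
  exact Nat.eq_of_mul_eq_mul_left (Nat.succ_pos _) hmult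

theorem card_filter_isSubdiagonalDyck_add_replicate_zero_mul {h : Multiset ℕ} {m : ℕ}
    (h0 : h.count 0 = 0) (hsum : h.sum = m) {T : Finset ℕ} (hT : h.toFinset ⊆ T)
    (h0T : 0 ∉ T) :
    #((h + Multiset.replicate m 0).arrangements.filter IsSubdiagonalDyck) *
        ((m + 1)! * ∏ x ∈ T, (h.count x)!) = (Multiset.card h + m)! := by
  have hcount (x) (hx : x ≠ 0) : (0 ::ₘ (h + Multiset.replicate m 0)).count x = h.count x := by
    rw [Multiset.count_cons_of_ne hx, Multiset.count_add, Multiset.count_replicate,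
      if_neg (Ne.symm hx), add_zero]
  have hsub : (0 ::ₘ (h + Multiset.replicate m 0)).toFinset ⊆ insert 0 T := by
    intro x hx
    rcases eq_or_ne x 0 with rfl | hx0
    · exact mem_insert_self 0 T
    · rw [Multiset.mem_toFinset, ← Multiset.count_pos, hcount x hx0, Multiset.count_pos,
        ← Multiset.mem_toFinset] at hx
      exact mem_insert_of_mem (hT hx)
  have key := card_filter_isSubdiagonalDyck_mul_prod_factorial_count
    (by simp [hsum, h0] : (h + Multiset.replicate m 0).sum = _) hsub
  rwa [prod_insert h0T, Multiset.count_cons_self, Multiset.count_add, h0,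
    Multiset.count_replicate_self, zero_add,
    prod_congr rfl fun x hx => by rw [hcount x (ne_of_mem_of_not_mem hx h0T)],
    Multiset.card_add, Multiset.card_replicate] at key

def horizontalSteps (S : Finset (ℕ × ℕ)) : Multiset ℕ :=
  S.val.bind fun p => Multiset.replicate p.2 (p.1 - 1)

theorem card_horizontalSteps (S : Finset (ℕ × ℕ)) :
    Multiset.card (horizontalSteps S) = ∑ p ∈ S, p.2 := by
  simp [horizontalSteps, Multiset.card_bind]

theorem toFinset_horizontalSteps_subset (S : Finset (ℕ × ℕ)) :
    (horizontalSteps S).toFinset ⊆ S.image fun p => p.1 - 1 := by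
  intro x hx
  simp only [horizontalSteps, Multiset.mem_toFinset, Multiset.mem_bind,
    Multiset.mem_replicate] at hx
  obtain ⟨p, hp, -, rfl⟩ := hx
  exact mem_image_of_mem _ hp

theorem count_zero_horizontalSteps {S : Finset (ℕ × ℕ)} (hS : ∀ p ∈ S, 2 ≤ p.1) :
    (horizontalSteps S).count 0 = 0 :=
  Multiset.count_eq_zero.2 fun h0 => by
    obtain ⟨p, hp, h0⟩ := Multiset.mem_bind.1 h0
    have := hS p hp
    rw [Multiset.mem_replicate] at h0
    omega

theorem sum_horizontalSteps_add {S : Finset (ℕ × ℕ)} (hS : ∀ p ∈ S, 2 ≤ p.1) :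
    (horizontalSteps S).sum + ∑ p ∈ S, p.2 = ∑ p ∈ S, p.1 * p.2 := by
  rw [horizontalSteps, Multiset.sum_bind, sum_map_val, ← sum_add_distrib]
  refine sum_congr rfl fun p hp => ?_
  obtain ⟨a, ha⟩ : ∃ a, p.1 = a + 1 := ⟨p.1 - 1, by have := hS p hp; omega⟩
  rw [Multiset.sum_replicate, smul_eq_mul, ha, Nat.add_sub_cancel]
  ring

/-- Let `S = {(a₁,t₁),…,(a_j,t_j)}` be a finite set of pairs of positive
integers with distinct `aᵢ`, `aᵢ ≥ 2` and `Σ aᵢ tᵢ = k`. The number of generalized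
subdiagonal Dyck paths on a `(k − Σtᵢ) × (k − Σtᵢ)` grid composed of `tᵢ` horizontal steps
of length `aᵢ − 1` (for each `i`) and `k − Σtᵢ` unit vertical steps equals
`k!/((Π tᵢ!)·(k+1 − Σtᵢ)!)`. -/
theorem generalized_dyck_path_count (k : ℕ) (S : Finset (ℕ × ℕ))
    (hS : ∀ p ∈ S, 2 ≤ p.1 ∧ 1 ≤ p.2)
    (hdist : ∀ p ∈ S, ∀ q ∈ S, p.1 = q.1 → p = q)
    (hsum : ∑ p ∈ S, p.1 * p.2 = k) :
    {L : List ℕ |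
        (L : Multiset ℕ) =
          (S.val.bind fun p => Multiset.replicate p.2 (p.1 - 1)) +
            Multiset.replicate (k - ∑ p ∈ S, p.2) 0 ∧
        IsSubdiagonalDyck L}.ncard =
      Nat.factorial k /
        ((∏ p ∈ S, Nat.factorial p.2) * Nat.factorial (k + 1 - ∑ p ∈ S, p.2)) := by
  have h2 : ∀ p ∈ S, 2 ≤ p.1 := fun p hp => (hS p hp).1
  have hinj : Set.InjOn (fun p : ℕ × ℕ => p.1 - 1) S := fun p hp q hq h =>
    hdist p hp q hq (by have := h2 p hp; have := h2 q hq; simp only at h; omega)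
  have h0 : 0 ∉ S.image fun p : ℕ × ℕ => p.1 - 1 := by
    simp only [mem_image, not_exists, not_and]
    exact fun p hp => by have := h2 p hp; omega
  have hbalance := sum_horizontalSteps_add h2
  rw [hsum] at hbalance
  have hcount := card_filter_isSubdiagonalDyck_add_replicate_zero_mul
    (count_zero_horizontalSteps h2) (m := k - ∑ p ∈ S, p.2) (by omega)
    (toFinset_horizontalSteps_subset S) h0
  rw [card_horizontalSteps, Nat.add_sub_cancel' (by omega)] at hcount
  unfold horizontalSteps at hcount
  rw [prod_image hinj, prod_congr rfl fun p hp =>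
    congrArg Nat.factorial (Multiset.count_bind_replicate hinj (·.2) hp)] at hcount
  rw [← Multiset.coe_filter_arrangements, Set.ncard_coe_finset, Nat.sub_add_comm (by omega)]
  exact Nat.eq_div_of_mul_eq_left (by positivity) (by rwa [mul_comm (∏ _ ∈ S, _)])
end
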